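/- arXiv:1811.08814 — 2 statements merged into one kernel-verified Lean document; each statement's English description precedes it below -/
import Mathlib

section
/- If f : ℝ^d → ℝ is Lipschitz with constant r and has support contained in the centered ball of radius N, then for any unit vector ν and any real numbers s₁, s₂, the Radon transform satisfies |R(f)(ν,s₁) − R(f)(ν,s₂)| ≤ r·N^{d−1}·|s₁ − s₂| (up to the volume constant of the (d−1)-dimensional unit ball). -/
/-! By Pythagoras `‖y‖ ≤ ‖s • ν + y‖` for `y ∈ ν^⊥`, so the integrand `y ↦ f (s • ν + y)` of
`R(f)(ν, s)` vanishes outside the ball of radius `N` of `ν^⊥`, a space of dimension `d - 1`.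
The integrands for `s₁` and `s₂` differ pointwise by at most `r ‖(s₁ - s₂) • ν‖ = r |s₁ - s₂|`,
so the Radon transforms differ by at most `r |s₁ - s₂|` times the volume `N^{d-1} C_{d-1}` of
that ball. -/

open MeasureTheory

/-- The Radon transform of `f : ℝ^d → ℝ`:
`R(f)(ν, s) = ∫_{ν^⊥} f (s • ν + y) dy`, the integral of `f` over the hyperplane
through `s • ν` orthogonal to `ν`. -/
noncomputable def radonTransform {d : ℕ} (f : EuclideanSpace ℝ (Fin d) → ℝ)
    (ν : EuclideanSpace ℝ (Fin d)) (s : ℝ) : ℝ :=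
  ∫ y : (ℝ ∙ ν)ᗮ, f (s • ν + (y : EuclideanSpace ℝ (Fin d)))

open Metric Module Function

theorem norm_integral_le_of_support_subset {α G : Type*} [MeasurableSpace α]
    [NormedAddCommGroup G] [NormedSpace ℝ G] {μ : Measure α} {s : Set α} (hs : μ s < ⊤)
    {g : α → G} (hg : support g ⊆ s) {C : ℝ} (hC : ∀ x ∈ s, ‖g x‖ ≤ C) :
    ‖∫ x, g x ∂μ‖ ≤ C * (μ s).toReal := by
  rw [← setIntegral_eq_integral_of_forall_compl_eq_zero
    fun x hx => notMem_support.mp (hx ∘ @hg x)]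
  exact norm_setIntegral_le_of_norm_le_const hs hC

section InnerProductSpace

variable {E : Type*} [NormedAddCommGroup E] [InnerProductSpace ℝ E]

theorem Submodule.norm_le_norm_add_of_mem_orthogonal {K : Submodule ℝ E} {x y : E}
    (hx : x ∈ K) (hy : y ∈ Kᗮ) : ‖y‖ ≤ ‖x + y‖ := by
  have hpyth := norm_add_sq_eq_norm_sq_add_norm_sq_real (K.inner_right_of_mem_orthogonal hx hy)
  rw [mul_self_le_mul_self_iff (norm_nonneg _) (norm_nonneg _), hpyth]
  linarith [mul_self_nonneg ‖x‖]

theorem Submodule.support_comp_add_orthogonal_subset {F : Type*} [Zero F] {K : Submodule ℝ E}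
    {x : E} (hx : x ∈ K) {f : E → F} {N : ℝ} (hf : support f ⊆ closedBall 0 N) :
    support (fun y : Kᗮ => f (x + y)) ⊆ closedBall 0 N := fun y hy => by
  have hxy := hf hy
  rw [mem_closedBall_zero_iff] at hxy ⊢
  exact (norm_le_norm_add_of_mem_orthogonal hx y.2).trans hxy

theorem finrank_orthogonal_span_singleton_eq_sub_one [FiniteDimensional ℝ E] {v : E}
    (hv : v ≠ 0) : finrank ℝ (ℝ ∙ v)ᗮ = finrank ℝ E - 1 := by
  have := (ℝ ∙ v).finrank_add_finrank_orthogonal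
  rw [finrank_span_singleton hv] at this
  omega

theorem volume_closedBall_eq_of_finrank_eq [FiniteDimensional ℝ E] [MeasurableSpace E]
    [BorelSpace E] {n : ℕ} (hn : finrank ℝ E = n) (x : E) {R : ℝ} (hR : 0 ≤ R) :
    volume (closedBall x R) =
      ENNReal.ofReal (R ^ n) * volume (closedBall (0 : EuclideanSpace ℝ (Fin n)) 1) := by
  subst hn
  rw [Measure.addHaar_closedBall' volume x hR,
    ← (stdOrthonormalBasis ℝ E).repr.measurePreserving.measure_preimage
      measurableSet_closedBall.nullMeasurableSet,
    LinearIsometryEquiv.preimage_closedBall, map_zero]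

end InnerProductSpace

/-- If `f : ℝ^d → ℝ` is Lipschitz with constant `r` and has support contained in the
centered ball of radius `N ≥ 0`, then for any unit vector `ν` and reals `s₁, s₂`,
`|R(f)(ν,s₁) − R(f)(ν,s₂)| ≤ C_{d-1} · r · N^{d−1} · |s₁ − s₂|`, where `C_{d-1}` is the
volume of the unit ball in dimension `d − 1`. -/
theorem radonTransform_lipschitz {d : ℕ} (f : EuclideanSpace ℝ (Fin d) → ℝ)
    (r : NNReal) (hf : LipschitzWith r f) (N : ℝ) (hN : 0 ≤ N)
    (hsupp : Function.support f ⊆ Metric.closedBall 0 N)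
    (ν : EuclideanSpace ℝ (Fin d)) (hν : ‖ν‖ = 1) (s₁ s₂ : ℝ) :
    |radonTransform f ν s₁ - radonTransform f ν s₂| ≤
      (volume (Metric.closedBall (0 : EuclideanSpace ℝ (Fin (d - 1))) 1)).toReal *
        r * N ^ (d - 1) * |s₁ - s₂| := by
  let g (s : ℝ) (y : (ℝ ∙ ν)ᗮ) : ℝ := f (s • ν + y)
  have hg_supp (s : ℝ) : support (g s) ⊆ closedBall 0 N :=
    Submodule.support_comp_add_orthogonal_subset
      (Submodule.smul_mem _ s (Submodule.mem_span_singleton_self ν)) hsupp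
  have hg_int (s : ℝ) : Integrable (g s) :=
    (hf.continuous.comp (continuous_const.add continuous_subtype_val))
      |>.integrable_of_hasCompactSupport
        (.of_support_subset_isCompact (isCompact_closedBall 0 N) (hg_supp s))
  have hg_sub (y : (ℝ ∙ ν)ᗮ) : ‖g s₁ y - g s₂ y‖ ≤ r * |s₁ - s₂| := by
    refine (hf.dist_le_mul _ _).trans_eq ?_
    rw [dist_add_right, dist_eq_norm, ← sub_smul, norm_smul, hν, Real.norm_eq_abs, mul_one]
  have hdim : finrank ℝ (ℝ ∙ ν)ᗮ = d - 1 := by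
    rw [finrank_orthogonal_span_singleton_eq_sub_one (norm_ne_zero_iff.mp (by simp [hν])),
      finrank_euclideanSpace_fin]
  calc |radonTransform f ν s₁ - radonTransform f ν s₂|
        = ‖∫ y, (g s₁ y - g s₂ y)‖ := by
        rw [integral_sub (hg_int s₁) (hg_int s₂)]; rfl
    _ ≤ r * |s₁ - s₂| * (volume (closedBall (0 : (ℝ ∙ ν)ᗮ) N)).toReal :=
        norm_integral_le_of_support_subset (isCompact_closedBall _ _).measure_lt_top
          ((support_sub _ _).trans (Set.union_subset (hg_supp s₁) (hg_supp s₂)))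
          fun y _ => hg_sub y
    _ = _ := by
        rw [volume_closedBall_eq_of_finrank_eq hdim 0 hN, ENNReal.toReal_mul,
          ENNReal.toReal_ofReal (by positivity)]
        ring
end

section
/- For a unit vector ν and s ∈ ℝ, define A_ν(f)(s) = R(f)(ν,s). Then for any Schwartz function f on ℝ^d, the d-dimensional Fourier transform of f evaluated at sν equals the 1-dimensional Fourier transform of A_ν(f) evaluated at s (the Fourier slice theorem), up to the normalizing constant (2π)^{(d−1)/2}. -/
open MeasureTheory Real
open scoped RealInnerProductSpace

/-- The `d`-dimensional Fourier transform with normalization `(2π)^{-d/2}`: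
`T(f)(z) = (2π)^{-d/2} ∫ f(x) e^{-i x·z} dx`. -/
noncomputable def fourierT {d : ℕ} (f : EuclideanSpace ℝ (Fin d) → ℝ)
    (z : EuclideanSpace ℝ (Fin d)) : ℂ :=
  ((2 * π : ℝ) ^ (-(d : ℝ) / 2) : ℝ) *
    ∫ x : EuclideanSpace ℝ (Fin d), (f x : ℂ) * Complex.exp (-Complex.I * (⟪x, z⟫ : ℝ))

/-- The one-dimensional Fourier transform with normalization `(2π)^{-1/2}`. -/
noncomputable def fourierT1 (g : ℝ → ℝ) (s : ℝ) : ℂ :=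
  ((2 * π : ℝ) ^ (-(1 : ℝ) / 2) : ℝ) *
    ∫ ς : ℝ, (g ς : ℂ) * Complex.exp (-Complex.I * (s * ς))

/-!
The map `(t, y) ↦ t • ν + y` from `ℝ × (ℝ ∙ ν)ᗮ` is a linear isometry for the `L²` product
norm, hence volume preserving, so by Fubini the integral over `ℝ^d` becomes an integral over `t`
of integrals over the hyperplanes `t • ν + ν^⊥`. On such a hyperplane `⟪x, s • ν⟫ = s * t`, so the
exponential factors out of the inner integral, which is then the Radon transform; the constants
combine as `(2π)^((d-1)/2) * (2π)^(-d/2) = (2π)^(-1/2)`.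
-/

theorem inner_smul_add_mem_orthogonal {E : Type*} [NormedAddCommGroup E] [InnerProductSpace ℝ E]
    {ν : E} (hν : ‖ν‖ = 1) (t : ℝ) {y : E} (hy : y ∈ (ℝ ∙ ν)ᗮ) :
    ⟪t • ν + y, ν⟫ = t := by
  rw [inner_add_left, real_inner_smul_left, real_inner_self_eq_norm_sq, hν,
    Submodule.inner_left_of_mem_orthogonal (Submodule.mem_span_singleton_self ν) hy]
  ring

section

variable {E : Type*} [NormedAddCommGroup E] [InnerProductSpace ℝ E] [FiniteDimensional ℝ E]
  [MeasurableSpace E] [BorelSpace E] {ν : E}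

noncomputable def smulAddOrthogonalEquiv (hν : ‖ν‖ = 1) : ℝ × (ℝ ∙ ν)ᗮ ≃ᵐ E :=
  (MeasurableEquiv.toLp 2 _).trans
    ((LinearIsometryEquiv.withLpProdCongr 2 (.toSpanUnitSingleton ν hν) (.refl ℝ _)).trans
      (ℝ ∙ ν).orthogonalDecomposition.symm).toMeasurableEquiv

theorem smulAddOrthogonalEquiv_apply (hν : ‖ν‖ = 1) (p : ℝ × (ℝ ∙ ν)ᗮ) :
    smulAddOrthogonalEquiv hν p = p.1 • ν + p.2 := by
  simp [smulAddOrthogonalEquiv]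

theorem measurePreserving_smulAddOrthogonalEquiv (hν : ‖ν‖ = 1) :
    MeasurePreserving (smulAddOrthogonalEquiv hν) := by
  rw [smulAddOrthogonalEquiv, MeasurableEquiv.coe_trans]
  exact (LinearIsometryEquiv.measurePreserving _).comp (WithLp.volume_preserving_toLp ℝ (ℝ ∙ ν)ᗮ)

theorem integral_eq_integral_integral_orthogonal {G : Type*} [NormedAddCommGroup G]
    [NormedSpace ℝ G] (hν : ‖ν‖ = 1) {g : E → G} (hg : Integrable g) :
    ∫ x, g x = ∫ t : ℝ, ∫ y : (ℝ ∙ ν)ᗮ, g (t • ν + y) := by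
  have he := measurePreserving_smulAddOrthogonalEquiv hν
  rw [← he.integral_comp', Measure.volume_eq_prod, integral_prod]
  · simp only [smulAddOrthogonalEquiv_apply]
  · exact (he.integrable_comp_emb (MeasurableEquiv.measurableEmbedding _)).2 hg

theorem integral_mul_exp_inner_smul_eq_integral_integral {f : E → ℝ} (hf : Integrable f)
    (hν : ‖ν‖ = 1) (s : ℝ) :
    ∫ x, (f x : ℂ) * Complex.exp (-Complex.I * (⟪x, s • ν⟫ : ℝ)) =
      ∫ t : ℝ, ((∫ y : (ℝ ∙ ν)ᗮ, f (t • ν + y) : ℝ) : ℂ) * Complex.exp (-Complex.I * (s * t)) := by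
  have hint : Integrable fun x => (f x : ℂ) * Complex.exp (-Complex.I * (⟪x, s • ν⟫ : ℝ)) :=
    hf.ofReal.mul_bdd (c := 1) (by fun_prop : Continuous _).aestronglyMeasurable
      (ae_of_all _ fun x => by simp [Complex.norm_exp])
  rw [integral_eq_integral_integral_orthogonal hν hint]
  congr 1 with t
  simp only [real_inner_smul_right, inner_smul_add_mem_orthogonal hν t (Subtype.prop _)]
  rw [integral_mul_const, integral_complex_ofReal, Complex.ofReal_mul]

end

/-- **Fourier slice theorem**: for a Schwartz function `f` on `ℝ^d` and a unit vector `ν`,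
the `d`-dimensional Fourier transform of `f` at `s • ν` equals, up to the constant
`(2π)^{(d-1)/2}`, the one-dimensional Fourier transform of `A_ν(f)(s) = R(f)(ν, s)`. -/
theorem fourier_slice {d : ℕ} (f : SchwartzMap (EuclideanSpace ℝ (Fin d)) ℝ)
    (ν : EuclideanSpace ℝ (Fin d)) (hν : ‖ν‖ = 1) (s : ℝ) :
    ((2 * π : ℝ) ^ (((d : ℝ) - 1) / 2) : ℝ) * fourierT (fun x => f x) (s • ν) =
      fourierT1 (fun ς => radonTransform (fun x => f x) ν ς) s := by
  rw [fourierT, fourierT1, integral_mul_exp_inner_smul_eq_integral_integral f.integrable hν s,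
    ← mul_assoc, ← Complex.ofReal_mul, ← Real.rpow_add (by positivity)]
  congr 3
  ring
end
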